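/- Let G be a finite group whose power graph P(G) is C_4-free. If the order of the center Z(G) is divisible by at least three distinct primes, then G is cyclic of order pqr for three distinct primes p, q, r. -/

import Mathlib

/-- Adjacency in the power graph of a group: two distinct elements are adjacent
iff one is a power of the other. -/
def pgAdj {G : Type*} [Group G] (x y : G) : Prop :=
  x ≠ y ∧ (x ∈ Subgroup.zpowers y ∨ y ∈ Subgroup.zpowers x)

/-- The power graph contains an induced 4-cycle. -/
def pgHasInducedC4 (G : Type*) [Group G] : Prop :=
  ∃ x u y v : G,
    x ≠ u ∧ x ≠ y ∧ x ≠ v ∧ u ≠ y ∧ u ≠ v ∧ y ≠ v ∧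
    pgAdj x u ∧ pgAdj u y ∧ pgAdj y v ∧ pgAdj v x ∧
    ¬ pgAdj x y ∧ ¬ pgAdj u v

/-- The power graph is `C₄`-free. -/
def pgC4Free (G : Type*) [Group G] : Prop := ¬ pgHasInducedC4 G

/-!
Take central elements `a`, `b`, `c` of the prime orders `p`, `q`, `r`; then `z = abc` has order
`pqr`, and since an element is generated by its prime-power parts it suffices to show that every
`g` of prime power order lies in `⟨z⟩`. Such a `g` has order coprime to two of the primes, say
`q` and `r`. If `g ∉ ⟨z⟩`, the power graph contains an induced `C₄`: `z – b – gb – a` when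
`a ∈ ⟨g⟩`, and `b – z – c – bcg` otherwise; the missing chords come from coprimality of orders.
-/

open Subgroup

section

variable {G : Type*} [Group G]

theorem mem_zpowers_pow_of_coprime {x w : G} {n : ℕ} (hx : x ∈ zpowers w)
    (hn : n.Coprime (orderOf x)) : x ∈ zpowers (w ^ n) := by
  obtain ⟨k, rfl⟩ := mem_zpowers_iff.mp hx
  obtain ⟨m, hm⟩ := exists_pow_eq_self_of_coprime hn
  rw [← hm, ← zpow_natCast (w ^ k), ← zpow_mul, mul_comm, zpow_mul, zpow_natCast]
  exact pow_mem (zpow_mem_zpowers _ k) m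

theorem Commute.mem_zpowers_mul_left {x y : G} (h : Commute x y)
    (hco : (orderOf x).Coprime (orderOf y)) : x ∈ zpowers (x * y) := by
  obtain ⟨m, hm⟩ := exists_pow_eq_self_of_coprime hco.symm
  have hpow : (x * y) ^ orderOf y = x ^ orderOf y := by
    rw [h.mul_pow, pow_orderOf_eq_one, mul_one]
  have hxpow : x ^ orderOf y ∈ zpowers (x * y) := hpow ▸ pow_mem (mem_zpowers (x * y)) _
  simpa only [hm] using pow_mem hxpow m

theorem Commute.mem_zpowers_mul_right {x y : G} (h : Commute x y)
    (hco : (orderOf x).Coprime (orderOf y)) : y ∈ zpowers (x * y) := by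
  rw [h.eq]
  exact h.symm.mem_zpowers_mul_left hco.symm

theorem notMem_zpowers_of_coprime {x y : G} (hco : (orderOf x).Coprime (orderOf y))
    (hx : x ≠ 1) : x ∉ zpowers y := fun (hxy : x ∈ zpowers y) =>
  hx (orderOf_eq_one_iff.mp (hco.eq_one_of_dvd (orderOf_dvd_of_mem_zpowers hxy)))

theorem Subgroup.mem_of_pow_mem_of_coprime {H : Subgroup G} {g : G} {m n : ℕ}
    (hmn : m.Coprime n) (hm : g ^ m ∈ H) (hn : g ^ n ∈ H) : g ∈ H := by
  obtain ⟨u, v, huv⟩ := Nat.isCoprime_iff_coprime.mpr hmn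
  have hg : g = (g ^ m) ^ u * (g ^ n) ^ v := by
    rw [← zpow_natCast, ← zpow_natCast, ← zpow_mul, ← zpow_mul, ← zpow_add,
      mul_comm (m : ℤ), mul_comm (n : ℤ), huv, zpow_one]
  rw [hg]
  exact mul_mem (Subgroup.zpow_mem H hm u) (Subgroup.zpow_mem H hn v)

theorem Subgroup.eq_top_of_isPrimePow_orderOf_mem [Finite G] {H : Subgroup G}
    (hH : ∀ g : G, IsPrimePow (orderOf g) → g ∈ H) : H = ⊤ := by
  suffices ∀ n g, orderOf g = n → g ∈ H from (eq_top_iff' H).mpr fun g => this _ g rfl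
  intro n
  induction n using Nat.recOnPosPrimePosCoprime with
  | prime_pow s k hs hk => exact fun g hg => hH g (hg ▸ hs.isPrimePow.pow hk.ne')
  | zero => exact fun g hg => absurd hg (orderOf_pos g).ne'
  | one => exact fun g hg => orderOf_eq_one_iff.mp hg ▸ one_mem H
  | coprime m n hm hn hmn ihm ihn =>
    intro g hg
    refine mem_of_pow_mem_of_coprime hmn (ihn _ ?_) (ihm _ ?_)
    · rw [orderOf_pow_of_dvd (by omega) (hg ▸ dvd_mul_right m n), hg,
        Nat.mul_div_cancel_left n (by omega : 0 < m)]
    · rw [orderOf_pow_of_dvd (by omega) (hg ▸ dvd_mul_left n m), hg,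
        Nat.mul_div_cancel m (by omega : 0 < n)]

theorem Subgroup.exists_mem_orderOf_eq_of_prime_dvd_card (H : Subgroup G) [Finite H] {p : ℕ}
    (hp : p.Prime) (hdvd : p ∣ Nat.card H) : ∃ x ∈ H, orderOf x = p := by
  have : Fact p.Prime := ⟨hp⟩
  obtain ⟨x, hx⟩ := exists_prime_orderOf_dvd_card' p hdvd
  exact ⟨x, x.2, (orderOf_coe x).trans hx⟩

theorem pgHasInducedC4_of_incomparable {x u y v : G}
    (hxu : x ∈ zpowers u ∨ u ∈ zpowers x) (huy : u ∈ zpowers y ∨ y ∈ zpowers u)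
    (hyv : y ∈ zpowers v ∨ v ∈ zpowers y) (hvx : v ∈ zpowers x ∨ x ∈ zpowers v)
    (hxy : x ∉ zpowers y) (hyx : y ∉ zpowers x)
    (huv : u ∉ zpowers v) (hvu : v ∉ zpowers u) :
    pgHasInducedC4 G := by
  have hne : ∀ {s t : G}, s ∉ zpowers t → s ≠ t := fun h e => h (e ▸ mem_zpowers _)
  have hxu' : x ≠ u := by rintro rfl; tauto
  have huy' : u ≠ y := by rintro rfl; tauto
  have hyv' : y ≠ v := by rintro rfl; tauto
  have hvx' : x ≠ v := by rintro rfl; tauto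
  exact ⟨x, u, y, v, hxu', hne hxy, hvx', huy', hne huv, hyv', ⟨hxu', hxu⟩, ⟨huy', huy⟩,
    ⟨hyv', hyv⟩, ⟨hvx'.symm, hvx⟩, fun ⟨_, h⟩ => by tauto, fun ⟨_, h⟩ => by tauto⟩

theorem pgC4Free.mem_zpowers_mul_mul (hG : pgC4Free G) {a b c g : G}
    (ha : a ≠ 1) (hb : b ≠ 1) (hc : c ≠ 1)
    (hab : Commute a b) (hac : Commute a c) (hbc : Commute b c)
    (hbg : Commute b g) (hcg : Commute c g)
    (hoab : (orderOf a).Coprime (orderOf b)) (hoac : (orderOf a).Coprime (orderOf c))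
    (hobc : (orderOf b).Coprime (orderOf c))
    (hgb : (orderOf g).Coprime (orderOf b)) (hgc : (orderOf g).Coprime (orderOf c)) :
    g ∈ zpowers (a * b * c) := by
  set z := a * b * c
  by_contra hgz
  have hbc_ord : orderOf (b * c) = orderOf b * orderOf c :=
    hbc.orderOf_mul_eq_mul_orderOf_of_coprime hobc
  have habc : Commute a (b * c) := hab.mul_right hac
  have hoabc : (orderOf a).Coprime (orderOf (b * c)) := hbc_ord ▸ hoab.mul_right hoac
  have hz : z = a * (b * c) := mul_assoc a b c
  have ha_z : a ∈ zpowers z := hz ▸ habc.mem_zpowers_mul_left hoabc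
  have hbc_z : zpowers (b * c) ≤ zpowers z :=
    zpowers_le.mpr (hz ▸ habc.mem_zpowers_mul_right hoabc)
  have hb_z : b ∈ zpowers z := hbc_z (hbc.mem_zpowers_mul_left hobc)
  have hc_z : c ∈ zpowers z := hbc_z (hbc.mem_zpowers_mul_right hobc)
  apply hG
  by_cases hag : a ∈ zpowers g
  · have hgb_le : zpowers g ≤ zpowers (g * b) :=
      zpowers_le.mpr (hbg.symm.mem_zpowers_mul_left hgb)
    have hcgb : (orderOf c).Coprime (orderOf (g * b)) := by
      rw [hbg.symm.orderOf_mul_eq_mul_orderOf_of_coprime hgb]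
      exact (hgc.mul_left hobc).symm
    exact pgHasInducedC4_of_incomparable (x := z) (u := b) (y := g * b) (v := a)
      (.inr hb_z) (.inl (hbg.symm.mem_zpowers_mul_right hgb)) (.inr (hgb_le hag)) (.inl ha_z)
      (fun h => notMem_zpowers_of_coprime hcgb hc (zpowers_le.mpr h hc_z))
      (fun h => hgz ((mul_mem_cancel_right hb_z).mp h))
      (notMem_zpowers_of_coprime hoab.symm hb) (notMem_zpowers_of_coprime hoab ha)
  · set w := b * c * g
    have hbcg : Commute (b * c) g := hbg.mul_left hcg
    have hbcg_cop : (orderOf (b * c)).Coprime (orderOf g) := hbc_ord ▸ (hgb.mul_right hgc).symm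
    have hbc_w : zpowers (b * c) ≤ zpowers w :=
      zpowers_le.mpr (hbcg.mem_zpowers_mul_left hbcg_cop)
    -- `a ∈ ⟨w⟩` would give `a ∈ ⟨w ^ |bc|⟩ = ⟨g ^ |bc|⟩ ≤ ⟨g⟩`
    have hwpow : w ^ orderOf (b * c) = g ^ orderOf (b * c) := by
      rw [hbcg.mul_pow, pow_orderOf_eq_one, one_mul]
    have ha_w : a ∉ zpowers w := fun h =>
      hag (zpowers_le.mpr (pow_mem (mem_zpowers g) _)
        (hwpow ▸ mem_zpowers_pow_of_coprime h hoabc.symm))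
    exact pgHasInducedC4_of_incomparable (x := b) (u := z) (y := c) (v := w)
      (.inl hb_z) (.inr hc_z) (.inl (hbc_w (hbc.mem_zpowers_mul_right hobc)))
      (.inr (hbc_w (hbc.mem_zpowers_mul_left hobc)))
      (notMem_zpowers_of_coprime hobc hb) (notMem_zpowers_of_coprime hobc.symm hc)
      (fun h => ha_w (zpowers_le.mpr h ha_z))
      (fun h => hgz ((mul_mem_cancel_left (hbc_z (mem_zpowers _))).mp h))

theorem pgC4Free.mem_zpowers_of_mem_center (hG : pgC4Free G) {a b c g : G}
    (ha : a ∈ center G) (hb : b ∈ center G) (hc : c ∈ center G)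
    (hpa : (orderOf a).Prime) (hpb : (orderOf b).Prime) (hpc : (orderOf c).Prime)
    (hab : orderOf a ≠ orderOf b) (hac : orderOf a ≠ orderOf c) (hbc : orderOf b ≠ orderOf c)
    (hgb : (orderOf g).Coprime (orderOf b)) (hgc : (orderOf g).Coprime (orderOf c)) :
    g ∈ zpowers (a * b * c) := by
  have hne : ∀ {t : G}, (orderOf t).Prime → t ≠ 1 := by
    rintro t ht rfl
    exact Nat.not_prime_one (orderOf_one (G := G) ▸ ht)
  exact hG.mem_zpowers_mul_mul (hne hpa) (hne hpb) (hne hpc)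
    (IsMulCentral.comm ha b) (IsMulCentral.comm ha c) (IsMulCentral.comm hb c)
    (IsMulCentral.comm hb g) (IsMulCentral.comm hc g)
    ((Nat.coprime_primes hpa hpb).mpr hab) ((Nat.coprime_primes hpa hpc).mpr hac)
    ((Nat.coprime_primes hpb hpc).mpr hbc) hgb hgc

theorem pgC4Free.mem_zpowers_of_isPrimePow (hG : pgC4Free G) {a b c : G}
    (ha : a ∈ center G) (hb : b ∈ center G) (hc : c ∈ center G)
    (hpa : (orderOf a).Prime) (hpb : (orderOf b).Prime) (hpc : (orderOf c).Prime)
    (hab : orderOf a ≠ orderOf b) (hac : orderOf a ≠ orderOf c) (hbc : orderOf b ≠ orderOf c)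
    {g : G} (hg : IsPrimePow (orderOf g)) : g ∈ zpowers (a * b * c) := by
  obtain ⟨s, k, hs, -, hsk⟩ := hg
  have hcop : ∀ {x : G}, (orderOf x).Prime → s ≠ orderOf x → (orderOf g).Coprime (orderOf x) :=
    fun hx hsx => hsk ▸ ((Nat.coprime_primes (Nat.prime_iff.mpr hs) hx).mpr hsx).pow_left k
  by_cases hsb : s = orderOf b
  · have hbac := hG.mem_zpowers_of_mem_center hb ha hc hpb hpa hpc hab.symm hbc hac
      (hcop hpa (hsb ▸ hab.symm)) (hcop hpc (hsb ▸ hbc))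
    rwa [(IsMulCentral.comm hb a).eq] at hbac
  by_cases hsc : s = orderOf c
  · have hcab := hG.mem_zpowers_of_mem_center hc ha hb hpc hpa hpb hac.symm hbc.symm hab
      (hcop hpa (hsc ▸ hac.symm)) (hcop hpb (hsc ▸ hbc.symm))
    rwa [mul_assoc, (IsMulCentral.comm hc _).eq] at hcab
  exact hG.mem_zpowers_of_mem_center ha hb hc hpa hpb hpc hab hac hbc
    (hcop hpb hsb) (hcop hpc hsc)

end

theorem cyclic_pqr_of_three_primes_dvd_center {G : Type*} [Group G] [Finite G]
    (h : pgC4Free G) (p q r : ℕ) (hp : p.Prime) (hq : q.Prime) (hr : r.Prime)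
    (hpq : p ≠ q) (hpr : p ≠ r) (hqr : q ≠ r)
    (hpZ : p ∣ Nat.card (Subgroup.center G))
    (hqZ : q ∣ Nat.card (Subgroup.center G))
    (hrZ : r ∣ Nat.card (Subgroup.center G)) :
    IsCyclic G ∧ Nat.card G = p * q * r := by
  obtain ⟨a, ha, rfl⟩ := (center G).exists_mem_orderOf_eq_of_prime_dvd_card hp hpZ
  obtain ⟨b, hb, rfl⟩ := (center G).exists_mem_orderOf_eq_of_prime_dvd_card hq hqZ
  obtain ⟨c, hc, rfl⟩ := (center G).exists_mem_orderOf_eq_of_prime_dvd_card hr hrZ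
  have hz : zpowers (a * b * c) = ⊤ := eq_top_of_isPrimePow_orderOf_mem fun _ =>
    h.mem_zpowers_of_isPrimePow ha hb hc hp hq hr hpq hpr hqr
  have hoab : orderOf (a * b) = orderOf a * orderOf b :=
    (IsMulCentral.comm ha b).orderOf_mul_eq_mul_orderOf_of_coprime
      ((Nat.coprime_primes hp hq).mpr hpq)
  have hoab_c : (orderOf (a * b)).Coprime (orderOf c) :=
    hoab ▸ ((Nat.coprime_primes hp hr).mpr hpr).mul_left ((Nat.coprime_primes hq hr).mpr hqr)
  have hoabc : orderOf (a * b * c) = orderOf a * orderOf b * orderOf c := by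
    rw [(IsMulCentral.comm hc _).symm.orderOf_mul_eq_mul_orderOf_of_coprime hoab_c, hoab]
  refine ⟨isCyclic_iff_exists_zpowers_eq_top.mpr ⟨_, hz⟩, ?_⟩
  rw [← hoabc, orderOf_eq_card_of_forall_mem_zpowers fun g => hz ▸ mem_top g]
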